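/- Let H > h/2 > 0, C > 0, ρ ≠ 0, z ∈ ℝ, and let 𝒦 be the integral operator on L²(ℝ) with kernel 𝕂(y,y') = Cρ²·K_H(z-(y+y')/2)·K_h(y'-y), with K_α(x) = (1/(√(2π)α))exp(-x²/(2α²)). Then for each n ≥ 0 there exists a monic polynomial p_n of degree n such that V_n(y) = exp(-(y-z)²/(2Hh))·p_n((y-z)/√(Hh)) satisfies 𝒦 V_n = Λ_n V_n with Λ_n = (Cρ²/(√(2π)(H+h/2)))·((H-h/2)/(H+h/2))^n. -/

import Mathlib

/-!
Put `c = (H - h/2)/(H + h/2)` and `σ = Hh/(H + h/2)`. Completing the square in `y'`, the substitution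
`y' = z + c (y - z) + σ u` turns the product of the two kernels and the Gaussian factor
`exp (-(y' - z)²/(2Hh))` into `exp (-(y - z)²/(2Hh)) · exp (-u²/2) / (2πHh)`. Taking for `pₙ` the monic
rescaling `pₙ(w) = 2^{-n/2} Heₙ(√2 w)` of the probabilists' Hermite polynomial, the eigenvalue equation
becomes Mehler's identity `E[Heₙ(c x + s Z)] = cⁿ Heₙ(x)` for a standard normal `Z` and `c² + s² = 1`.
That identity follows by induction from `Heₙ₊₁ = X Heₙ - Heₙ'`, `Heₙ₊₁' = (n + 1) Heₙ` and Gaussian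
integration by parts `E[Z f(Z)] = E[f'(Z)]`.
-/

open MeasureTheory Real Polynomial

noncomputable def K (α x : ℝ) : ℝ :=
  (1 / (Real.sqrt (2 * π) * α)) * Real.exp (-x ^ 2 / (2 * α ^ 2))

theorem derivative_hermite_succ (n : ℕ) :
    derivative (hermite (n + 1)) = ((n + 1 : ℕ) : ℤ[X]) * hermite n := by
  induction n with
  | zero => simp
  | succ n ih =>
    rw [hermite_succ (n + 1), derivative_sub, derivative_mul, derivative_X, ih,
      derivative_natCast_mul, hermite_succ n]
    push_cast
    ring

theorem integral_exp_neg_sq_div_two : ∫ u : ℝ, exp (-u ^ 2 / 2) = √(2 * π) := by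
  convert integral_gaussian (1 / 2) using 2
  · ring_nf
  · field_simp

theorem integrable_eval_mul_exp_neg_sq_div_two (q : ℝ[X]) :
    Integrable fun u : ℝ => q.eval u * exp (-u ^ 2 / 2) := by
  have hmonomial (k : ℕ) : Integrable fun u : ℝ => u ^ k * exp (-u ^ 2 / 2) := by
    have := integrable_rpow_mul_exp_neg_mul_sq (b := 1 / 2) (by norm_num)
      (s := k) (by linarith [k.cast_nonneg (α := ℝ)])
    simpa [Real.rpow_natCast, neg_div, div_eq_inv_mul] using this
  simp_rw [eval_eq_sum_range, Finset.sum_mul, mul_assoc]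
  exact integrable_finsetSum _ fun k _ => (hmonomial k).const_mul _

theorem integral_mul_eval_mul_exp_neg_sq_div_two (q : ℝ[X]) :
    ∫ u : ℝ, u * q.eval u * exp (-u ^ 2 / 2) =
      ∫ u : ℝ, (derivative q).eval u * exp (-u ^ 2 / 2) := by
  have hgauss (u : ℝ) :
      HasDerivAt (fun u : ℝ => -exp (-u ^ 2 / 2)) (u * exp (-u ^ 2 / 2)) u := by
    have h : HasDerivAt (fun u : ℝ => -u ^ 2 / 2) (-u) u :=
      ((hasDerivAt_pow 2 u).neg.div_const 2).congr_deriv (by ring)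
    exact h.exp.neg.congr_deriv (by ring)
  have := integral_mul_deriv_eq_deriv_mul_of_integrable (fun u _ => q.hasDerivAt u)
    (fun u _ => hgauss u)
    ((integrable_eval_mul_exp_neg_sq_div_two (X * q)).congr <| ae_of_all _ fun u => by
      simp only [Pi.mul_apply, eval_mul, eval_X]; ring)
    ((integrable_eval_mul_exp_neg_sq_div_two (-derivative q)).congr <| ae_of_all _ fun u => by
      simp)
    ((integrable_eval_mul_exp_neg_sq_div_two (-q)).congr <| ae_of_all _ fun u => by simp)
  simp only [mul_neg, integral_neg, neg_neg] at this
  simpa only [mul_left_comm, mul_assoc] using this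

theorem integral_eval_X_mul_sub_derivative_mul_exp {c s : ℝ} (hcs : c ^ 2 + s ^ 2 = 1)
    (x : ℝ) (p : ℝ[X]) :
    ∫ u : ℝ, (X * p - derivative p).eval (c * x + s * u) * exp (-u ^ 2 / 2) =
      c * x * (∫ u : ℝ, p.eval (c * x + s * u) * exp (-u ^ 2 / 2)) -
        c ^ 2 * ∫ u : ℝ, (derivative p).eval (c * x + s * u) * exp (-u ^ 2 / 2) := by
  set ℓ : ℝ[X] := C (c * x) + C s * X
  have hℓ (r : ℝ[X]) (u : ℝ) : r.eval (c * x + s * u) = (r.comp ℓ).eval u := by simp [ℓ]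
  have hint (r : ℝ[X]) : Integrable fun u : ℝ => r.eval (c * x + s * u) * exp (-u ^ 2 / 2) :=
    (integrable_eval_mul_exp_neg_sq_div_two (r.comp ℓ)).congr <| ae_of_all _ fun u => by
      simp only [hℓ]
  have hintX : Integrable fun u : ℝ => u * p.eval (c * x + s * u) * exp (-u ^ 2 / 2) :=
    (integrable_eval_mul_exp_neg_sq_div_two (X * p.comp ℓ)).congr <| ae_of_all _ fun u => by
      simp only [hℓ, eval_mul, eval_X]
  have hstein : ∫ u : ℝ, u * p.eval (c * x + s * u) * exp (-u ^ 2 / 2) =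
      s * ∫ u : ℝ, (derivative p).eval (c * x + s * u) * exp (-u ^ 2 / 2) := by
    simp_rw [hℓ, integral_mul_eval_mul_exp_neg_sq_div_two, ← integral_const_mul,
      derivative_comp]
    simp [ℓ, mul_assoc]
  have hsplit (u : ℝ) : (X * p - derivative p).eval (c * x + s * u) * exp (-u ^ 2 / 2) =
      c * x * (p.eval (c * x + s * u) * exp (-u ^ 2 / 2)) +
        s * (u * p.eval (c * x + s * u) * exp (-u ^ 2 / 2)) -
        (derivative p).eval (c * x + s * u) * exp (-u ^ 2 / 2) := by
    simp only [eval_sub, eval_mul, eval_X]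
    ring
  simp_rw [hsplit]
  rw [integral_sub ?_ (hint _), integral_add ((hint p).const_mul _) (hintX.const_mul _),
    integral_const_mul, integral_const_mul, hstein]
  · linear_combination (∫ u : ℝ, (derivative p).eval (c * x + s * u) * exp (-u ^ 2 / 2)) * hcs
  · exact ((hint p).const_mul _).add (hintX.const_mul _)

theorem integral_aeval_hermite_succ_mul_exp {c s : ℝ} (hcs : c ^ 2 + s ^ 2 = 1) (x : ℝ)
    (n : ℕ) :
    ∫ u : ℝ, aeval (c * x + s * u) (hermite (n + 1)) * exp (-u ^ 2 / 2) =
      c * x * (∫ u : ℝ, aeval (c * x + s * u) (hermite n) * exp (-u ^ 2 / 2)) -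
        c ^ 2 * ∫ u : ℝ, aeval (c * x + s * u) (derivative (hermite n)) * exp (-u ^ 2 / 2) := by
  have h := integral_eval_X_mul_sub_derivative_mul_exp hcs x ((hermite n).map (algebraMap ℤ ℝ))
  rw [derivative_map, ← map_X (algebraMap ℤ ℝ), ← Polynomial.map_mul, ← Polynomial.map_sub,
    ← hermite_succ] at h
  simpa only [eval_map_algebraMap] using h

theorem integral_aeval_hermite_mul_exp {c s : ℝ} (hcs : c ^ 2 + s ^ 2 = 1) (x : ℝ) :
    ∀ n : ℕ, ∫ u : ℝ, aeval (c * x + s * u) (hermite n) * exp (-u ^ 2 / 2) =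
      √(2 * π) * c ^ n * aeval x (hermite n)
  | 0 => by simp [integral_exp_neg_sq_div_two]
  | 1 => by
    rw [integral_aeval_hermite_succ_mul_exp hcs x, integral_aeval_hermite_mul_exp hcs x 0,
      hermite_zero, derivative_C, hermite_one]
    simp only [map_zero, zero_mul, integral_zero, mul_zero, sub_zero, aeval_X, map_one]
    ring
  | n + 2 => by
    rw [integral_aeval_hermite_succ_mul_exp hcs x, derivative_hermite_succ,
      integral_aeval_hermite_mul_exp hcs x (n + 1)]
    simp only [map_mul, map_natCast, mul_assoc, integral_const_mul]
    rw [integral_aeval_hermite_mul_exp hcs x n, hermite_succ (n + 1), derivative_hermite_succ]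
    simp only [map_sub, map_mul, aeval_X, map_natCast]
    ring

theorem eval_scaleRoots_map_hermite (n : ℕ) (w : ℝ) :
    (((hermite n).map (algebraMap ℤ ℝ)).scaleRoots (√2)⁻¹).eval w =
      (√2)⁻¹ ^ n * aeval (√2 * w) (hermite n) := by
  have h := scaleRoots_eval_mul ((hermite n).map (algebraMap ℤ ℝ)) (√2 * w) (√2)⁻¹
  rwa [inv_mul_cancel_left₀ (by positivity), (hermite_monic n).natDegree_map, natDegree_hermite,
    eval_map_algebraMap] at h

theorem integral_eq_smul_integral_comp_add_mul {E : Type*} [NormedAddCommGroup E]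
    [NormedSpace ℝ E] (f : ℝ → E) (a : ℝ) {σ : ℝ} (hσ : 0 < σ) :
    ∫ v : ℝ, f v = σ • ∫ u : ℝ, f (a + σ * u) := by
  rw [Measure.integral_comp_mul_left (fun v => f (a + v)), integral_add_left_eq_self,
    abs_of_pos (inv_pos.2 hσ), smul_inv_smul₀ hσ.ne']

theorem K_mul_K_mul_exp_eq {H h : ℝ} (hH : H ≠ 0) (hh : h ≠ 0) (hHh : H + h / 2 ≠ 0)
    {y y' z u : ℝ}
    (hy' : y' = z + (H - h / 2) / (H + h / 2) * (y - z) + H * h / (H + h / 2) * u) :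
    K H (z - (y + y') / 2) * K h (y' - y) * exp (-(y' - z) ^ 2 / (2 * H * h)) =
      exp (-(y - z) ^ 2 / (2 * H * h)) * exp (-u ^ 2 / 2) / (2 * π * H * h) := by
  have hexp : -(z - (y + y') / 2) ^ 2 / (2 * H ^ 2) + -(y' - y) ^ 2 / (2 * h ^ 2) +
      -(y' - z) ^ 2 / (2 * H * h) = -(y - z) ^ 2 / (2 * H * h) + -u ^ 2 / 2 := by
    have h2Hh : 2 * H + h ≠ 0 := by contrapose! hHh; linarith
    rw [show (H - h / 2) / (H + h / 2) = (2 * H - h) / (2 * H + h) by field_simp,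
      show H * h / (H + h / 2) = 2 * H * h / (2 * H + h) by field_simp] at hy'
    subst hy'
    field_simp
    ring
  have hsqrt : √(2 * π) ^ 2 = 2 * π := sq_sqrt (by positivity)
  simp only [K]
  rw [← exp_add, mul_mul_mul_comm, mul_assoc, ← exp_add, ← exp_add, hexp]
  field_simp
  rw [hsqrt]

theorem integral_K_mul_K_mul_exp_mul {H h : ℝ} (hH : 0 < H) (hh : 0 < h) (f : ℝ → ℝ)
    (y z : ℝ) :
    ∫ y' : ℝ, K H (z - (y + y') / 2) * K h (y' - y) * (exp (-(y' - z) ^ 2 / (2 * H * h)) * f y') =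
      exp (-(y - z) ^ 2 / (2 * H * h)) / (2 * π * (H + h / 2)) *
        ∫ u : ℝ, f (z + (H - h / 2) / (H + h / 2) * (y - z) + H * h / (H + h / 2) * u) *
          exp (-u ^ 2 / 2) := by
  have hHh : 0 < H + h / 2 := by positivity
  rw [integral_eq_smul_integral_comp_add_mul _ (z + (H - h / 2) / (H + h / 2) * (y - z))
    (by positivity : 0 < H * h / (H + h / 2)), smul_eq_mul, ← integral_const_mul,
    ← integral_const_mul]
  congr 1 with u
  rw [← mul_assoc (K H _ * K h _), K_mul_K_mul_exp_eq hH.ne' hh.ne' hHh.ne' rfl]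
  field_simp

theorem single_reflector_spectrum_general (H h C ρ z : ℝ) (hh : 0 < h) (hH : h / 2 < H)
    (n : ℕ) :
    ∃ p : Polynomial ℝ, p.Monic ∧ p.natDegree = n ∧
      ∀ y : ℝ,
        (∫ y' : ℝ,
            C * ρ ^ 2 * K H (z - (y + y') / 2) * K h (y' - y) *
              (Real.exp (-(y' - z) ^ 2 / (2 * H * h)) *
                p.eval ((y' - z) / Real.sqrt (H * h)))) =
          ((C * ρ ^ 2 / (Real.sqrt (2 * π) * (H + h / 2))) *
              ((H - h / 2) / (H + h / 2)) ^ n) *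
            (Real.exp (-(y - z) ^ 2 / (2 * H * h)) *
              p.eval ((y - z) / Real.sqrt (H * h))) := by
  have hH0 : 0 < H := by linarith
  set c := (H - h / 2) / (H + h / 2)
  set t := √(H * h)
  set s := √2 * (H * h / (H + h / 2)) / t
  have hcs : c ^ 2 + s ^ 2 = 1 := by
    have ht : t ^ 2 = H * h := sq_sqrt (by positivity)
    have hHh : 0 < H + h / 2 := by linarith
    simp only [c, s, div_pow, mul_pow, ht, sq_sqrt zero_le_two]
    field_simp
    ring
  refine ⟨((hermite n).map (algebraMap ℤ ℝ)).scaleRoots (√2)⁻¹,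
    (monic_scaleRoots_iff _).2 ((hermite_monic n).map _), ?_, fun y => ?_⟩
  · rw [natDegree_scaleRoots, (hermite_monic n).natDegree_map, natDegree_hermite]
  have harg (u : ℝ) :
      √2 * ((z + (H - h / 2) / (H + h / 2) * (y - z) + H * h / (H + h / 2) * u - z) / t) =
      c * (√2 * ((y - z) / t)) + s * u := by ring
  simp_rw [mul_assoc (C * ρ ^ 2), integral_const_mul, integral_K_mul_K_mul_exp_mul hH0 hh,
    eval_scaleRoots_map_hermite, harg, mul_assoc ((√2)⁻¹ ^ n), integral_const_mul,
    integral_aeval_hermite_mul_exp hcs]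
  have hsqrt : √(2 * π) ^ 2 = 2 * π := sq_sqrt (by positivity)
  field_simp
  rw [hsqrt]
  ring

theorem single_reflector_spectrum (H h C ρ z : ℝ) (hh : 0 < h) (hH : h / 2 < H)
    (hC : 0 < C) (hρ : ρ ≠ 0) (n : ℕ) :
    ∃ p : Polynomial ℝ, p.Monic ∧ p.natDegree = n ∧
      ∀ y : ℝ,
        (∫ y' : ℝ,
            C * ρ ^ 2 * K H (z - (y + y') / 2) * K h (y' - y) *
              (Real.exp (-(y' - z) ^ 2 / (2 * H * h)) *
                p.eval ((y' - z) / Real.sqrt (H * h)))) =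
          ((C * ρ ^ 2 / (Real.sqrt (2 * π) * (H + h / 2))) *
              ((H - h / 2) / (H + h / 2)) ^ n) *
            (Real.exp (-(y - z) ^ 2 / (2 * H * h)) *
              p.eval ((y - z) / Real.sqrt (H * h))) :=
  single_reflector_spectrum_general H h C ρ z hh hH n
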